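/- Let I ⊆ S = K[x_1,…,x_n] be a matroidal ideal generated in degree d with Supp(I) = {x_1,…,x_n} and gcd(I) = 1. Let Γ_1,…,Γ_s be the connected components of the linear relation graph Γ_I, and let P_1,…,P_s be the monomial prime ideals generated by the sets of vertices of Γ_1,…,Γ_s respectively. Then I ⊆ P_1 ∩ ⋯ ∩ P_s. -/

import Mathlib

open MvPolynomial

noncomputable section

/-- The depth of `S/I` as a module over `S = K[x_1,…,x_n]` with respect to the graded
maximal ideal `𝔪 = (x_1,…,x_n)`: the supremum of lengths of regular sequences on `S/I`
consisting of elements of `𝔪`. -/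
def mDepth (n : ℕ) (K : Type*) [Field K] (I : Ideal (MvPolynomial (Fin n) K)) : ℕ :=
  sSup {k : ℕ | ∃ rs : List (MvPolynomial (Fin n) K), rs.length = k ∧
    (∀ r ∈ rs, r ∈ Ideal.span (Set.range (X : Fin n → MvPolynomial (Fin n) K))) ∧
    RingTheory.Sequence.IsRegular (MvPolynomial (Fin n) K ⧸ I) rs}

/-- `I` has a constant depth function: `depth S/I^k = depth S/I` for all `k ≥ 1`. -/
def HasConstantDepthFunction (n : ℕ) (K : Type*) [Field K]
    (I : Ideal (MvPolynomial (Fin n) K)) : Prop :=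
  ∀ k : ℕ, 1 ≤ k → mDepth n K (I ^ k) = mDepth n K I

/-- The depth of a Noetherian local ring: supremum of lengths of regular sequences
contained in the maximal ideal. -/
def localRingDepth (R : Type*) [CommRing R] [IsLocalRing R] : ℕ :=
  sSup {k : ℕ | ∃ rs : List R, rs.length = k ∧
    (∀ r ∈ rs, r ∈ IsLocalRing.maximalIdeal R) ∧
    RingTheory.Sequence.IsRegular R rs}

/-- A commutative ring is Cohen–Macaulay if for every prime `p` the localization at `p`
has depth equal to its Krull dimension. -/
def IsCohenMacaulayRing (R : Type*) [CommRing R] : Prop :=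
  ∀ (p : Ideal R) [p.IsPrime],
    ringKrullDim (Localization.AtPrime p) =
      (localRingDepth (Localization.AtPrime p) : WithBot ℕ∞)

/-- `I` is a monomial ideal generated by monomials in the variables from `T`. -/
def IsMonomialIdealOn (n : ℕ) (K : Type*) [Field K]
    (I : Ideal (MvPolynomial (Fin n) K)) (T : Set (Fin n)) : Prop :=
  ∃ A : Set (Fin n →₀ ℕ), (∀ a ∈ A, (a.support : Set (Fin n)) ⊆ T) ∧
    I = Ideal.span ((fun a => (monomial a (1 : K) : MvPolynomial (Fin n) K)) '' A)

/-- `I` is a monomial ideal. -/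
def IsMonomialIdeal (n : ℕ) (K : Type*) [Field K]
    (I : Ideal (MvPolynomial (Fin n) K)) : Prop :=
  IsMonomialIdealOn n K I Set.univ

/-- `I` and `J` are monomial ideals generated in disjoint sets of variables. -/
def GeneratedInDisjointVars (n : ℕ) (K : Type*) [Field K]
    (I J : Ideal (MvPolynomial (Fin n) K)) : Prop :=
  ∃ T₁ T₂ : Set (Fin n), Disjoint T₁ T₂ ∧
    IsMonomialIdealOn n K I T₁ ∧ IsMonomialIdealOn n K J T₂

/-- The ideal of the Rees algebra `R(I)` generated by the image of the graded maximal
ideal `𝔪 ⊆ S`. -/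
def fiberIdeal (n : ℕ) (K : Type*) [Field K] (I : Ideal (MvPolynomial (Fin n) K)) :
    Ideal (reesAlgebra I) :=
  Ideal.span ((algebraMap (MvPolynomial (Fin n) K) (reesAlgebra I)) ''
    ((Ideal.span (Set.range (X : Fin n → MvPolynomial (Fin n) K)) :
      Ideal (MvPolynomial (Fin n) K)) : Set (MvPolynomial (Fin n) K)))

/-- The analytic spread `ℓ(I)`: the Krull dimension of the fiber ring
`R(I)/𝔪R(I)` of the Rees algebra of `I`. -/
def analyticSpread (n : ℕ) (K : Type*) [Field K]
    (I : Ideal (MvPolynomial (Fin n) K)) : ℕ :=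
  ((ringKrullDim ((reesAlgebra I) ⧸ fiberIdeal n K I)).unbotD 0).untopD 0

/-- `B` is the set of supports of the minimal monomial generators of a matroidal ideal
generated in degree `d`: a nonempty family of `d`-subsets of the variables satisfying
the exchange property. -/
def IsMatroidalGens (n d : ℕ) (B : Finset (Finset (Fin n))) : Prop :=
  B.Nonempty ∧ (∀ u ∈ B, u.card = d) ∧
    ∀ u ∈ B, ∀ v ∈ B, ∀ i ∈ u, i ∉ v →
      ∃ j, j ∈ v ∧ j ∉ u ∧ insert j (u.erase i) ∈ B

/-- The squarefree monomial ideal whose minimal generators are the monomials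
`∏_{i ∈ u} x_i`, `u ∈ B`. -/
def sqfreeIdeal (n : ℕ) (K : Type*) [Field K] (B : Finset (Finset (Fin n))) :
    Ideal (MvPolynomial (Fin n) K) :=
  Ideal.span ((fun u : Finset (Fin n) => ∏ i ∈ u, (X i : MvPolynomial (Fin n) K)) '' B)

/-- The linear relation graph `Γ_I` of the squarefree monomial ideal with generators `B`:
`{x_i, x_j}` is an edge iff there are generators `u_k, u_l` with `x_i u_k = x_j u_l`. -/
def linRelGraph (n : ℕ) (B : Finset (Finset (Fin n))) : SimpleGraph (Fin n) :=
  SimpleGraph.fromRel (fun i j => ∃ u ∈ B, j ∈ u ∧ i ∉ u ∧ insert i (u.erase j) ∈ B)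

/-- The vertex set `V(Γ_I)` of the linear relation graph. -/
def linRelVerts (n : ℕ) (B : Finset (Finset (Fin n))) : Set (Fin n) :=
  {i | ∃ j, (linRelGraph n B).Adj i j}

/-- The number `s` of connected components of the linear relation graph `Γ_I`
(as a graph on its vertex set `V(Γ_I)`). -/
noncomputable def numComponentsLRG (n : ℕ) (B : Finset (Finset (Fin n))) : ℕ :=
  Nat.card ((linRelGraph n B).induce (linRelVerts n B)).ConnectedComponent

/-! Let `v` be a vertex of a component of `Γ_I` and `u` a generator. If `v ∉ u`, then `v` lies in
some generator `w`, and the exchange property moves `v` out of `w` towards `u`, bringing in some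
`j ∈ u` with `x_v · (w ∖ v ∪ j) = x_j · w`: an edge `v — j` of `Γ_I`. So every generator meets every
component, i.e. is divisible by a variable of each `P_k`. -/

lemma linRelGraph_adj_of_exchange {n : ℕ} {B : Finset (Finset (Fin n))} {w : Finset (Fin n)}
    {i j : Fin n} (hw : w ∈ B) (hi : i ∈ w) (hj : j ∉ w) (hex : insert j (w.erase i) ∈ B) :
    (linRelGraph n B).Adj i j := by
  rw [linRelGraph, SimpleGraph.fromRel_adj]
  exact ⟨fun h => hj (h ▸ hi), Or.inr ⟨w, hw, hi, hj, hex⟩⟩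

lemma IsMatroidalGens.exists_mem_adj_of_notMem {n d : ℕ} {B : Finset (Finset (Fin n))}
    (hB : IsMatroidalGens n d B) {u w : Finset (Fin n)} (hu : u ∈ B) (hw : w ∈ B) {v : Fin n}
    (hvw : v ∈ w) (hvu : v ∉ u) : ∃ j ∈ u, (linRelGraph n B).Adj v j := by
  obtain ⟨j, hju, hjw, hex⟩ := hB.2.2 w hw u hu v hvw hvu
  exact ⟨j, hju, linRelGraph_adj_of_exchange hw hvw hjw hex⟩

lemma IsMatroidalGens.exists_mem_supp {n d : ℕ} {B : Finset (Finset (Fin n))}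
    (hB : IsMatroidalGens n d B) (hsupp : ∀ i : Fin n, ∃ u ∈ B, i ∈ u)
    (c : ((linRelGraph n B).induce (linRelVerts n B)).ConnectedComponent)
    {u : Finset (Fin n)} (hu : u ∈ B) : ∃ i ∈ u, i ∈ Subtype.val '' c.supp := by
  obtain ⟨v, rfl⟩ := c.exists_rep
  by_cases hvu : (v : Fin n) ∈ u
  · exact ⟨v, hvu, v, rfl, rfl⟩
  obtain ⟨w, hw, hvw⟩ := hsupp v
  obtain ⟨j, hju, hadj⟩ := hB.exists_mem_adj_of_notMem hu hw hvw hvu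
  have hj : j ∈ linRelVerts n B := ⟨v, hadj.symm⟩
  have hadj' : ((linRelGraph n B).induce (linRelVerts n B)).Adj ⟨j, hj⟩ v := hadj.symm
  exact ⟨j, hju, ⟨j, hj⟩, SimpleGraph.ConnectedComponent.sound hadj'.reachable, rfl⟩

theorem matroidal_subset_component_primes_general (n d : ℕ) (K : Type*) [Field K]
    (B : Finset (Finset (Fin n))) (hB : IsMatroidalGens n d B)
    (hsupp : ∀ i : Fin n, ∃ u ∈ B, i ∈ u)
    (I : Ideal (MvPolynomial (Fin n) K)) (hI : I = sqfreeIdeal n K B) :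
    ∀ c : ((linRelGraph n B).induce (linRelVerts n B)).ConnectedComponent,
      I ≤ Ideal.span
        ((fun i => (X i : MvPolynomial (Fin n) K)) '' (Subtype.val '' c.supp)) := by
  intro c
  rw [hI, sqfreeIdeal, Ideal.span_le]
  rintro _ ⟨u, hu, rfl⟩
  obtain ⟨i, hiu, hic⟩ := hB.exists_mem_supp hsupp c hu
  exact Ideal.prod_mem _ hiu (Ideal.subset_span (Set.mem_image_of_mem _ hic))

/-- Let `I` be a matroidal ideal generated in degree `d` with
`Supp(I) = {x_1,…,x_n}` and `gcd(I) = 1`. If `P_1,…,P_s` are the monomial prime ideals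
generated by the vertex sets of the connected components of `Γ_I`, then
`I ⊆ P_1 ∩ ⋯ ∩ P_s`. -/
theorem matroidal_subset_component_primes (n d : ℕ) (K : Type*) [Field K]
    (B : Finset (Finset (Fin n))) (hB : IsMatroidalGens n d B)
    (hsupp : ∀ i : Fin n, ∃ u ∈ B, i ∈ u)
    (hgcd : ∀ i : Fin n, ∃ u ∈ B, i ∉ u)
    (I : Ideal (MvPolynomial (Fin n) K)) (hI : I = sqfreeIdeal n K B) :
    ∀ c : ((linRelGraph n B).induce (linRelVerts n B)).ConnectedComponent,
      I ≤ Ideal.span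
        ((fun i => (X i : MvPolynomial (Fin n) K)) '' (Subtype.val '' c.supp)) :=
  matroidal_subset_component_primes_general n d K B hB hsupp I hI

end
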